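/- arXiv:0705.2074 — 3 statements merged into one kernel-verified Lean document; each statement's English description precedes it below -/
import Mathlib

section
/- Let q be a positive integer and let a₀ ∈ ℂ with |a₀| sufficiently small (|a₀| < 1 suffices for injectivity near 0 with an appropriate branch). Define v(u) := u (1 - a₀ (ū/u)^{q+1})^{1/(q+1)} for u ≠ 0 and v(0) := 0. Then v is a Lipschitz map on a neighborhood of 0 in ℂ, and if |a₀| is sufficiently small, v is a bi-Lipschitz homeomorphism onto a neighborhood of 0; moreover |v(u)| is comparable to |u|: (1-|a₀|)^{1/(q+1)} |u| ≤ |v(u)| ≤ (1+|a₀|)^{1/(q+1)} |u|. -/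
/-- The change of coordinates `v(u) := u (1 - a₀ (ū/u)^{q+1})^{1/(q+1)}` (principal branch),
extended by `v(0) := 0`. -/
noncomputable def vmap (q : ℕ) (a₀ : ℂ) : ℂ → ℂ :=
  fun u => u * (1 - a₀ * ((starRingEnd ℂ) u / u) ^ (q + 1)) ^ ((1 : ℂ) / ((q : ℂ) + 1))

/-!
Write `v(u) = u φ(u)` with `φ(u) = (1 - a₀ (ū/u)^{q+1})^{1/(q+1)}`, where `|a₀ (ū/u)^{q+1}| ≤ |a₀|`
keeps the base in a disc around `1` on which `z ↦ z^{1/(q+1)}` is `(1-|a₀|)⁻¹`-Lipschitz. The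
direction `ū/u` is not Lipschitz near `0`, but after multiplication by `u` it is: for
`|u'| ≤ |u|` one has `|u'| |ū/u - ū'/u'| ≤ 2 |u - u'|`. Hence `u ↦ v(u) - u` is Lipschitz with
constant `(2q+3)|a₀|/(1-|a₀|)`, so `v` is a small Lipschitz perturbation of the identity, and for
small `a₀` the quantitative inverse function theorem (`ApproximatesLinearOn`) makes it
bi-Lipschitz and open.
-/

open ComplexConjugate Metric

lemma norm_pow_sub_pow_le_of_norm_le_one {R : Type*} [SeminormedRing R] [NormOneClass R]
    {a b : R} (ha : ‖a‖ ≤ 1) (hb : ‖b‖ ≤ 1) (n : ℕ) :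
    ‖a ^ n - b ^ n‖ ≤ n * ‖a - b‖ := by
  induction n with
  | zero => simp
  | succ n ih =>
    have hbn : ‖b ^ n‖ ≤ 1 := (norm_pow_le b n).trans (pow_le_one₀ (norm_nonneg b) hb)
    calc ‖a ^ (n + 1) - b ^ (n + 1)‖ = ‖a * (a ^ n - b ^ n) + (a - b) * b ^ n‖ := by
          rw [pow_succ', pow_succ']; congr 1; noncomm_ring
      _ ≤ ‖a‖ * ‖a ^ n - b ^ n‖ + ‖a - b‖ * ‖b ^ n‖ :=
          (norm_add_le _ _).trans (add_le_add (norm_mul_le _ _) (norm_mul_le _ _))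
      _ ≤ 1 * (n * ‖a - b‖) + ‖a - b‖ * 1 := by gcongr
      _ = (n + 1 : ℕ) * ‖a - b‖ := by push_cast; ring

lemma LipschitzWith.of_sub_id {E : Type*} [SeminormedAddCommGroup E] {f : E → E} {K : NNReal}
    (h : LipschitzWith K fun x => f x - x) : LipschitzWith (K + 1) f := by
  simpa using h.add LipschitzWith.id

namespace Complex

lemma norm_conj_div_self_le (u : ℂ) : ‖conj u / u‖ ≤ 1 := by
  rw [norm_div, norm_conj]
  exact div_self_le_one _

lemma norm_mul_conj_div_self_pow_le (a u : ℂ) (n : ℕ) : ‖a * (conj u / u) ^ n‖ ≤ ‖a‖ := by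
  rw [norm_mul, norm_pow]
  exact mul_le_of_le_one_right (norm_nonneg a)
    (pow_le_one₀ (norm_nonneg _) (norm_conj_div_self_le u))

lemma norm_mul_conj_div_self_sub_le {u u' : ℂ} (h : ‖u'‖ ≤ ‖u‖) :
    ‖u'‖ * ‖conj u / u - conj u' / u'‖ ≤ 2 * ‖u - u'‖ := by
  rcases eq_or_ne u' 0 with rfl | hu'
  · simp
  have hu : u ≠ 0 := by
    rintro rfl
    exact hu' (norm_le_zero_iff.1 (by simpa using h))
  have key : conj u / u - conj u' / u' =
      (conj (u - u') * u' - conj u' * (u - u')) / (u * u') := by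
    rw [div_sub_div _ _ hu hu', map_sub]
    ring
  calc ‖u'‖ * ‖conj u / u - conj u' / u'‖
      = ‖conj (u - u') * u' - conj u' * (u - u')‖ / ‖u‖ := by
        rw [key, norm_div, norm_mul]
        field_simp
    _ ≤ (‖u - u'‖ * ‖u'‖ + ‖u'‖ * ‖u - u'‖) / ‖u‖ := by
        gcongr
        refine (norm_sub_le _ _).trans_eq ?_
        rw [norm_mul, norm_mul, norm_conj, norm_conj]
    _ = 2 * ‖u - u'‖ * (‖u'‖ / ‖u‖) := by ring
    _ ≤ 2 * ‖u - u'‖ * 1 := by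
        gcongr
        exact div_le_one_of_le₀ h (norm_nonneg u)
    _ = 2 * ‖u - u'‖ := mul_one _

lemma norm_one_sub_cpow_sub_le {c r : ℝ} (hc₀ : 0 ≤ c) (hc₁ : c ≤ 1) (hr : r < 1) {w w' : ℂ}
    (hw : ‖w‖ ≤ r) (hw' : ‖w'‖ ≤ r) :
    ‖(1 - w) ^ (c : ℂ) - (1 - w') ^ (c : ℂ)‖ ≤ (1 - r)⁻¹ * ‖w - w'‖ := by
  have hr₀ : 0 ≤ r := (norm_nonneg w).trans hw
  have hlow : ∀ z ∈ closedBall (0 : ℂ) r, 1 - r ≤ ‖1 - z‖ := fun z hz => by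
    rw [mem_closedBall, dist_zero_right] at hz
    linarith [norm_sub_norm_le (1 : ℂ) z, norm_one (α := ℂ)]
  have hderiv : ∀ z ∈ closedBall (0 : ℂ) r, HasDerivWithinAt (fun z : ℂ => (1 - z) ^ (c : ℂ))
      ((c : ℂ) * (1 - z) ^ ((c : ℂ) - 1) * (-1)) (closedBall 0 r) z := fun z hz => by
    have hz : ‖-z‖ < 1 := by
      rw [norm_neg]
      exact (mem_closedBall_zero_iff.1 hz).trans_lt hr
    have hslit : 1 - z ∈ slitPlane := sub_eq_add_neg (1 : ℂ) z ▸ mem_slitPlane_of_norm_lt_one hz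
    exact (((hasDerivAt_id z).const_sub 1).cpow_const hslit).hasDerivWithinAt
  have hbound : ∀ z ∈ closedBall (0 : ℂ) r,
      ‖(c : ℂ) * (1 - z) ^ ((c : ℂ) - 1) * (-1)‖ ≤ (1 - r)⁻¹ := fun z hz => by
    have hexp : (c : ℂ) - 1 = ((c - 1 : ℝ) : ℂ) := by push_cast; ring
    rw [norm_mul, norm_mul, norm_neg, norm_one, mul_one, norm_real, Real.norm_of_nonneg hc₀,
      hexp, norm_cpow_real]
    calc c * ‖1 - z‖ ^ (c - 1) ≤ 1 * (1 - r) ^ (c - 1) := by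
          gcongr ?_ * ?_
          exact Real.rpow_le_rpow_of_nonpos (by linarith) (hlow z hz) (by linarith)
      _ ≤ (1 - r) ^ (-1 : ℝ) := by
          rw [one_mul]
          exact Real.rpow_le_rpow_of_exponent_ge (by linarith) (by linarith) (by linarith)
      _ = (1 - r)⁻¹ := Real.rpow_neg_one _
  simpa [norm_sub_rev] using
    (convex_closedBall (0 : ℂ) r).norm_image_sub_le_of_norm_hasDerivWithin_le hderiv hbound
      (by simpa using hw) (by simpa using hw')

end Complex

section vmap

variable (q : ℕ) {a₀ : ℂ}

lemma vmap_eq (a₀ u : ℂ) : vmap q a₀ u =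
    u * (1 - a₀ * (conj u / u) ^ (q + 1)) ^ ((1 / (q + 1) : ℝ) : ℂ) := by
  simp [vmap]

lemma vmap_zero (a₀ : ℂ) : vmap q a₀ 0 = 0 := by
  simp [vmap]

lemma norm_vmap (a₀ u : ℂ) : ‖vmap q a₀ u‖ =
    ‖1 - a₀ * (conj u / u) ^ (q + 1)‖ ^ (1 / ((q : ℝ) + 1)) * ‖u‖ := by
  rw [vmap_eq, norm_mul, Complex.norm_cpow_real, mul_comm]

lemma le_norm_vmap (ha : ‖a₀‖ ≤ 1) (u : ℂ) :
    (1 - ‖a₀‖) ^ (1 / ((q : ℝ) + 1)) * ‖u‖ ≤ ‖vmap q a₀ u‖ := by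
  have hw := Complex.norm_mul_conj_div_self_pow_le a₀ u (q + 1)
  have hlow := norm_sub_norm_le (1 : ℂ) (a₀ * (conj u / u) ^ (q + 1))
  rw [norm_one] at hlow
  rw [norm_vmap]
  gcongr
  linarith

lemma norm_vmap_le (a₀ u : ℂ) :
    ‖vmap q a₀ u‖ ≤ (1 + ‖a₀‖) ^ (1 / ((q : ℝ) + 1)) * ‖u‖ := by
  have hw := Complex.norm_mul_conj_div_self_pow_le a₀ u (q + 1)
  have hup := norm_sub_le (1 : ℂ) (a₀ * (conj u / u) ^ (q + 1))
  rw [norm_one] at hup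
  rw [norm_vmap]
  gcongr
  linarith

lemma norm_vmap_sub_self_sub_le (ha : ‖a₀‖ < 1) (u u' : ℂ) :
    ‖(vmap q a₀ u - u) - (vmap q a₀ u' - u')‖ ≤
      (2 * q + 3) * ‖a₀‖ / (1 - ‖a₀‖) * ‖u - u'‖ := by
  wlog h : ‖u'‖ ≤ ‖u‖ generalizing u u'
  · rw [norm_sub_rev, norm_sub_rev u]
    exact this u' u (le_of_not_ge h)
  set φ : ℂ → ℂ := fun x => (1 - a₀ * (conj x / x) ^ (q + 1)) ^ ((1 / (q + 1) : ℝ) : ℂ)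
  have hv (x : ℂ) : vmap q a₀ x = x * φ x := vmap_eq q a₀ x
  set L := (1 - ‖a₀‖)⁻¹
  have hc₀ : (0 : ℝ) ≤ 1 / (q + 1) := by positivity
  have hc₁ : 1 / ((q : ℝ) + 1) ≤ 1 :=
    div_le_one_of_le₀ (le_add_of_nonneg_left q.cast_nonneg) (by positivity)
  have hφ (x x' : ℂ) : ‖φ x - φ x'‖ ≤
      L * ‖a₀ * (conj x / x) ^ (q + 1) - a₀ * (conj x' / x') ^ (q + 1)‖ :=
    Complex.norm_one_sub_cpow_sub_le hc₀ hc₁ ha (Complex.norm_mul_conj_div_self_pow_le a₀ x _)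
      (Complex.norm_mul_conj_div_self_pow_le a₀ x' _)
  have hφ_one : ‖φ u - 1‖ ≤ L * ‖a₀‖ := by
    have hw := Complex.norm_mul_conj_div_self_pow_le a₀ u (q + 1)
    have := Complex.norm_one_sub_cpow_sub_le hc₀ hc₁ ha hw (w' := 0) (by simp)
    rw [sub_zero, sub_zero, Complex.one_cpow] at this
    exact this.trans (by gcongr)
  have hφ_sub : ‖u'‖ * ‖φ u - φ u'‖ ≤ L * ‖a₀‖ * (2 * (q + 1)) * ‖u - u'‖ := by
    have hpow := norm_pow_sub_pow_le_of_norm_le_one (Complex.norm_conj_div_self_le u)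
      (Complex.norm_conj_div_self_le u') (q + 1)
    have hdir := Complex.norm_mul_conj_div_self_sub_le h
    calc ‖u'‖ * ‖φ u - φ u'‖
        ≤ ‖u'‖ * (L * (‖a₀‖ * ((q + 1 : ℕ) * ‖conj u / u - conj u' / u'‖))) := by
          gcongr
          refine (hφ u u').trans ?_
          rw [← mul_sub, norm_mul]
          gcongr
      _ = L * ‖a₀‖ * (q + 1) * (‖u'‖ * ‖conj u / u - conj u' / u'‖) := by push_cast; ring
      _ ≤ L * ‖a₀‖ * (q + 1) * (2 * ‖u - u'‖) := by gcongr
      _ = L * ‖a₀‖ * (2 * (q + 1)) * ‖u - u'‖ := by ring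
  calc ‖(vmap q a₀ u - u) - (vmap q a₀ u' - u')‖
      = ‖(u - u') * (φ u - 1) + u' * (φ u - φ u')‖ := by
        rw [hv, hv]
        congr 1
        ring
    _ ≤ ‖u - u'‖ * (L * ‖a₀‖) + L * ‖a₀‖ * (2 * (q + 1)) * ‖u - u'‖ := by
        refine (norm_add_le _ _).trans ?_
        rw [norm_mul, norm_mul]
        gcongr
    _ = (2 * q + 3) * ‖a₀‖ / (1 - ‖a₀‖) * ‖u - u'‖ := by ring

lemma lipschitzWith_vmap_sub_self (ha : ‖a₀‖ < 1) :
    LipschitzWith (Real.toNNReal ((2 * q + 3) * ‖a₀‖ / (1 - ‖a₀‖)))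
      (fun u => vmap q a₀ u - u) :=
  LipschitzWith.of_dist_le_mul fun u u' => by
    rw [dist_eq_norm, dist_eq_norm]
    exact (norm_vmap_sub_self_sub_le q ha u u').trans (by gcongr; exact Real.le_coe_toNNReal _)

lemma lipschitzWith_vmap_sub_self_half (ha : (4 * q + 7) * ‖a₀‖ ≤ 1) :
    LipschitzWith (1 / 2) (fun u => vmap q a₀ u - u) := by
  have ha₁ : ‖a₀‖ < 1 := by nlinarith [norm_nonneg a₀]
  refine (lipschitzWith_vmap_sub_self q ha₁).weaken ?_
  rw [Real.toNNReal_le_iff_le_coe, div_le_iff₀ (by linarith)]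
  push_cast
  linarith

lemma approximatesLinearOn_vmap (ha : (4 * q + 7) * ‖a₀‖ ≤ 1) (s : Set ℂ) :
    ApproximatesLinearOn (vmap q a₀) (ContinuousLinearEquiv.refl ℂ ℂ : ℂ →L[ℂ] ℂ) s (1 / 2) :=
  (lipschitzWith_vmap_sub_self_half q ha).lipschitzOnWith.approximatesLinearOn

lemma antilipschitzWith_domRestrict_vmap (ha : (4 * q + 7) * ‖a₀‖ ≤ 1) (s : Set ℂ) :
    AntilipschitzWith 2 (s.domRestrict (vmap q a₀)) := by
  have hN : ‖((ContinuousLinearEquiv.refl ℂ ℂ).symm : ℂ →L[ℂ] ℂ)‖₊ = 1 := by simp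
  convert (approximatesLinearOn_vmap q ha s).antilipschitz (Or.inr ?_) using 1
  · rw [hN, inv_one, ← NNReal.coe_inj,
      NNReal.coe_inv, NNReal.coe_sub (by norm_num)]
    norm_num
  · rw [hN]
    norm_num

lemma vmap_image_mem_nhds (ha : (4 * q + 7) * ‖a₀‖ ≤ 1) {s : Set ℂ} (hs : s ∈ nhds 0) :
    vmap q a₀ '' s ∈ nhds 0 := by
  have hN : (ContinuousLinearEquiv.refl ℂ ℂ).toNonlinearRightInverse.nnnorm = 1 := by
    simp [ContinuousLinearEquiv.toNonlinearRightInverse]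
  have := (approximatesLinearOn_vmap q ha s).image_mem_nhds
    (ContinuousLinearEquiv.refl ℂ ℂ).toNonlinearRightInverse hs (Or.inr (by rw [hN]; norm_num))
  rwa [vmap_zero] at this

lemma lipschitzWith_vmap_two (ha : (4 * q + 7) * ‖a₀‖ ≤ 1) : LipschitzWith 2 (vmap q a₀) := by
  refine (lipschitzWith_vmap_sub_self_half q ha).of_sub_id.weaken ?_
  rw [← NNReal.coe_le_coe]
  push_cast
  norm_num

end vmap

theorem stmt_15_general (q : ℕ) :
    (∀ a₀ : ℂ, ‖a₀‖ < 1 →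
      ((∃ ε > (0:ℝ), ∃ K : NNReal, LipschitzOnWith K (vmap q a₀) (Metric.ball 0 ε)) ∧
       (∀ u : ℂ,
         (1 - ‖a₀‖) ^ ((1:ℝ) / ((q:ℝ) + 1)) * ‖u‖ ≤ ‖vmap q a₀ u‖ ∧
         ‖vmap q a₀ u‖ ≤ (1 + ‖a₀‖) ^ ((1:ℝ) / ((q:ℝ) + 1)) * ‖u‖))) ∧
    (∃ δ > (0:ℝ), ∀ a₀ : ℂ, ‖a₀‖ < δ →
      ∃ ε > (0:ℝ), ∃ K : NNReal,
        LipschitzOnWith K (vmap q a₀) (Metric.ball 0 ε) ∧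
        AntilipschitzWith K ((Metric.ball (0:ℂ) ε).restrict (vmap q a₀)) ∧
        vmap q a₀ '' Metric.ball 0 ε ∈ nhds (0:ℂ)) := by
  refine ⟨fun a₀ ha => ⟨?_, fun u => ⟨le_norm_vmap q ha.le u, norm_vmap_le q a₀ u⟩⟩,
    1 / (4 * q + 7), by positivity, fun a₀ ha => ?_⟩
  · exact ⟨1, one_pos, _, (lipschitzWith_vmap_sub_self q ha).of_sub_id.lipschitzOnWith⟩
  have hsmall : (4 * q + 7) * ‖a₀‖ ≤ 1 := by
    rw [lt_div_iff₀ (by positivity)] at ha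
    linarith
  exact ⟨1, one_pos, 2, (lipschitzWith_vmap_two q hsmall).lipschitzOnWith,
    antilipschitzWith_domRestrict_vmap q hsmall _,
    vmap_image_mem_nhds q hsmall (ball_mem_nhds 0 one_pos)⟩

/-- The Lipschitz change of coordinates near a ramification point: for `|a₀| < 1`, `vmap` is
Lipschitz on a neighborhood of `0` and satisfies
`(1-|a₀|)^{1/(q+1)} |u| ≤ |v(u)| ≤ (1+|a₀|)^{1/(q+1)} |u|`; and for `|a₀|` sufficiently small,
`vmap` is a bi-Lipschitz homeomorphism of a neighborhood of `0` onto a neighborhood of `0`. -/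
theorem stmt_15 (q : ℕ) (hq : 0 < q) :
    (∀ a₀ : ℂ, ‖a₀‖ < 1 →
      ((∃ ε > (0:ℝ), ∃ K : NNReal, LipschitzOnWith K (vmap q a₀) (Metric.ball 0 ε)) ∧
       (∀ u : ℂ,
         (1 - ‖a₀‖) ^ ((1:ℝ) / ((q:ℝ) + 1)) * ‖u‖ ≤ ‖vmap q a₀ u‖ ∧
         ‖vmap q a₀ u‖ ≤ (1 + ‖a₀‖) ^ ((1:ℝ) / ((q:ℝ) + 1)) * ‖u‖))) ∧
    (∃ δ > (0:ℝ), ∀ a₀ : ℂ, ‖a₀‖ < δ →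
      ∃ ε > (0:ℝ), ∃ K : NNReal,
        LipschitzOnWith K (vmap q a₀) (Metric.ball 0 ε) ∧
        AntilipschitzWith K ((Metric.ball (0:ℂ) ε).restrict (vmap q a₀)) ∧
        vmap q a₀ '' Metric.ball 0 ε ∈ nhds (0:ℂ)) :=
  stmt_15_general q
end

section
/- Fix σ ∈ (0, 1], ρ > 0, κ := -3/4 + σ - ε for ε ∈ (0, σ). Suppose λ : {v ∈ ℂ : |v| < ρ} → ℂ satisfies λ(0) = 0, and there exist constants c, c' such that for all |v| < ρ/2: |λ(v)| ≤ c' |v|^{σ - ε + 1/4} (1 + Σ_{n ≥ 1, 2ⁿ|v| < ρ} 2^{κn}) + c ρ^{-1} |v|. If σ < 1, choose ε with σ' := σ - ε + 1/4 ∈ (σ, 1); then κ < 0, the geometric sum converges, and |λ(v)| ≤ C |v|^{σ'} for a constant C. Consequently, the supremum of exponents σ' such that |λ(v)| ≤ C_{σ'} |v|^{σ'} near 0 must equal 1. -/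
open Set

/-- Exponent-improvement (bootstrapping) step: suppose `λ(0) = 0` and for every
`ε ∈ (0, σ)` (with `κ := -3/4 + σ - ε`) one has
`|λ(v)| ≤ c' |v|^{σ-ε+1/4} (1 + Σ_{n≥1, 2ⁿ|v|<ρ} 2^{κn}) + c ρ⁻¹ |v|` for `|v| < ρ/2`.
Then whenever `σ' := σ-ε+1/4 < 1` one gets `κ < 0`, convergence of the geometric sum, and a
Hölder bound `|λ(v)| ≤ C |v|^{σ'}`; consequently if `σ` is the supremum of the valid Hölder
exponents, then `σ = 1`. -/
theorem stmt_16 (ρ σ c : ℝ) (hρ : 0 < ρ) (hσ : σ ∈ Ioc (0:ℝ) 1) (hc : 0 ≤ c)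
    (lam : ℂ → ℂ) (hlam0 : lam 0 = 0)
    (hbound : ∀ ε ∈ Ioo (0:ℝ) σ, ∃ c' : ℝ, 0 ≤ c' ∧ ∀ v : ℂ, ‖v‖ < ρ / 2 →
      ‖lam v‖ ≤ c' * ‖v‖ ^ (σ - ε + 1/4) *
          (1 + ∑' n : ℕ, if 1 ≤ n ∧ (2:ℝ) ^ n * ‖v‖ < ρ
            then (2:ℝ) ^ ((-3/4 + σ - ε) * (n:ℝ)) else 0)
        + c * ρ⁻¹ * ‖v‖) :
    (∀ ε ∈ Ioo (0:ℝ) σ, σ - ε + 1/4 < 1 →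
      (-3/4 + σ - ε < 0 ∧
       Summable (fun n : ℕ => (2:ℝ) ^ ((-3/4 + σ - ε) * (n:ℝ))) ∧
       ∃ C : ℝ, ∀ v : ℂ, ‖v‖ < ρ / 2 → ‖lam v‖ ≤ C * ‖v‖ ^ (σ - ε + 1/4))) ∧
    (IsLUB {t : ℝ | ∃ C : ℝ, ∀ v : ℂ, ‖v‖ < ρ / 2 → ‖lam v‖ ≤ C * ‖v‖ ^ t} σ → σ = 1) := by
  have part1 : ∀ ε ∈ Ioo (0:ℝ) σ, σ - ε + 1/4 < 1 →
      (-3/4 + σ - ε < 0 ∧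
       Summable (fun n : ℕ => (2:ℝ) ^ ((-3/4 + σ - ε) * (n:ℝ))) ∧
       ∃ C : ℝ, ∀ v : ℂ, ‖v‖ < ρ / 2 → ‖lam v‖ ≤ C * ‖v‖ ^ (σ - ε + 1/4)) := by
    intro ε hε hσ'
    have hκ : -3/4 + σ - ε < 0 := by linarith
    have hr0 : (0:ℝ) ≤ (2:ℝ) ^ (-3/4 + σ - ε) := Real.rpow_nonneg (by norm_num) _
    have hr1 : (2:ℝ) ^ (-3/4 + σ - ε) < 1 :=
      Real.rpow_lt_one_of_one_lt_of_neg (by norm_num) hκ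
    have hterm : ∀ n : ℕ, (0:ℝ) ≤ (2:ℝ) ^ ((-3/4 + σ - ε) * (n:ℝ)) :=
      fun n => Real.rpow_nonneg (by norm_num) _
    have hsum : Summable (fun n : ℕ => (2:ℝ) ^ ((-3/4 + σ - ε) * (n:ℝ))) := by
      refine (summable_geometric_of_lt_one hr0 hr1).congr fun n => ?_
      rw [← Real.rpow_natCast ((2:ℝ) ^ (-3/4 + σ - ε)) n,
        ← Real.rpow_mul (by norm_num : (0:ℝ) ≤ 2)]
    obtain ⟨c', hc'0, hc'⟩ := hbound ε hε
    set S := ∑' n : ℕ, (2:ℝ) ^ ((-3/4 + σ - ε) * (n:ℝ)) with hSdef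
    have hS0 : 0 ≤ S := tsum_nonneg hterm
    have hif : ∀ v : ℂ,
        (∑' n : ℕ, if 1 ≤ n ∧ (2:ℝ) ^ n * ‖v‖ < ρ
          then (2:ℝ) ^ ((-3/4 + σ - ε) * (n:ℝ)) else 0) ≤ S := by
      intro v
      refine Summable.tsum_le_tsum (fun n => ?_) ?_ hsum
      · split
        · exact le_refl _
        · exact hterm n
      · refine Summable.of_nonneg_of_le (fun n => ?_) (fun n => ?_) hsum
        · split
          · exact hterm n
          · exact le_refl _
        · split
          · exact le_refl _
          · exact hterm n
    have hσ'pos : 0 < σ - ε + 1/4 := by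
      have := hε.2; linarith
    refine ⟨hκ, hsum, c' * (1 + S) + c * ρ⁻¹ * (ρ/2) ^ (1 - (σ - ε + 1/4)), ?_⟩
    intro v hv
    rcases eq_or_ne v 0 with rfl | hv0
    · simp only [norm_zero, hlam0]
      rw [Real.zero_rpow (ne_of_gt hσ'pos)]
      simp
    · have hvpos : 0 < ‖v‖ := norm_pos_iff.mpr hv0
      have h1 := hc' v hv
      have key : ‖v‖ ≤ (ρ/2) ^ (1 - (σ - ε + 1/4)) * ‖v‖ ^ (σ - ε + 1/4) := by
        have heq : ‖v‖ = ‖v‖ ^ (1 - (σ - ε + 1/4)) * ‖v‖ ^ (σ - ε + 1/4) := by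
          rw [← Real.rpow_add hvpos]; norm_num
        conv_lhs => rw [heq]
        refine mul_le_mul_of_nonneg_right ?_ (Real.rpow_nonneg hvpos.le _)
        exact Real.rpow_le_rpow hvpos.le hv.le (by linarith)
      have h2 : c' * ‖v‖ ^ (σ - ε + 1/4) *
          (1 + ∑' n : ℕ, if 1 ≤ n ∧ (2:ℝ) ^ n * ‖v‖ < ρ
            then (2:ℝ) ^ ((-3/4 + σ - ε) * (n:ℝ)) else 0)
          ≤ c' * ‖v‖ ^ (σ - ε + 1/4) * (1 + S) := by
        refine mul_le_mul_of_nonneg_left ?_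
          (mul_nonneg hc'0 (Real.rpow_nonneg hvpos.le _))
        linarith [hif v]
      have h3 : c * ρ⁻¹ * ‖v‖ ≤
          c * ρ⁻¹ * ((ρ/2) ^ (1 - (σ - ε + 1/4)) * ‖v‖ ^ (σ - ε + 1/4)) := by
        refine mul_le_mul_of_nonneg_left key ?_
        exact mul_nonneg hc (inv_nonneg.mpr hρ.le)
      have hring : (c' * (1 + S) + c * ρ⁻¹ * (ρ/2) ^ (1 - (σ - ε + 1/4)))
          * ‖v‖ ^ (σ - ε + 1/4)
          = c' * ‖v‖ ^ (σ - ε + 1/4) * (1 + S)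
            + c * ρ⁻¹ * ((ρ/2) ^ (1 - (σ - ε + 1/4)) * ‖v‖ ^ (σ - ε + 1/4)) := by
        ring
      rw [hring]
      linarith
  refine ⟨part1, ?_⟩
  intro hlub
  by_contra hne
  have hσ1 : σ < 1 := lt_of_le_of_ne hσ.2 hne
  set ε := ((max (σ - 3/4) 0) + (min σ (1/4:ℝ))) / 2 with hεdef
  have h1 : max (σ - 3/4) 0 < min σ (1/4:ℝ) := by
    apply max_lt <;> apply lt_min <;> linarith [hσ.1]
  have hεlo : max (σ - 3/4) 0 < ε := by rw [hεdef]; linarith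
  have hεhi : ε < min σ (1/4:ℝ) := by rw [hεdef]; linarith
  have hεpos : 0 < ε := lt_of_le_of_lt (le_max_right _ _) hεlo
  have hεσ : ε < σ := lt_of_lt_of_le hεhi (min_le_left _ _)
  have hε14 : ε < 1/4 := lt_of_lt_of_le hεhi (min_le_right _ _)
  have hε34 : σ - 3/4 < ε := lt_of_le_of_lt (le_max_left _ _) hεlo
  obtain ⟨-, -, C, hC⟩ := part1 ε ⟨hεpos, hεσ⟩ (by linarith)
  have hmem : σ - ε + 1/4 ∈ {t : ℝ | ∃ C : ℝ, ∀ v : ℂ, ‖v‖ < ρ / 2 →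
      ‖lam v‖ ≤ C * ‖v‖ ^ t} := ⟨C, hC⟩
  have := hlub.1 hmem
  linarith
end

section
/- Let q ≥ 1 be an integer, let ε₃ > 0, and consider the function h(u) := ∂_ū(π̄_τ)/∂_u(π_τ) - (ū/u)^q on the punctured disc, where π_τ(u) = z₀ + u^{q+1} + b_{q-1}u^{q-1} + ⋯ + b₀ with |∂_u π_τ(u) - (q+1)u^q| ≤ C|τ| for |u| < R. Suppose |h| ≤ M uniformly, and h(u) ≤ ε₃ whenever |u| ≥ C' |τ|^{1/q} ε₃^{-1/(2q)}. Then for any v ∈ (0, 2), any ρ ∈ (0, R/4) and center u₀ with |u₀| ≤ R/4: ρ^{-v} ∫_{|u - u₀| < ρ} |h(u)|² d²u ≤ C''(ε₃² ρ^{2 - v} + M² (|τ|^{1/q} ε₃^{-1/(2q)})^{2 - v}), which tends to 0 as τ → 0 (choosing ε₃ → 0 appropriately). -/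
/-!
Split the ball `B(u₀, ρ)` along the disc `B(0, r)`, `r = C' |τ|^{1/q} ε₃^{-1/(2q)}`. Outside the
disc `|h| ≤ ε₃`, contributing at most `π ε₃² ρ²`; inside, `|h| ≤ M` on a set of area at most
`π min(r, ρ)²`. Since `0 < v < 2`, the weight turns `ρ^{-v} min(r, ρ)²` into at most `r^{2-v}`.
-/

open MeasureTheory Set

theorem setIntegral_sq_norm_le_of_le_off {α E : Type*} [MeasurableSpace α]
    [NormedAddCommGroup E] {μ : Measure α} {f : α → E} {s t : Set α} {M ε : ℝ}
    (hs : μ s ≠ ⊤) (ht : MeasurableSet t) (hM : ∀ x, ‖f x‖ ≤ M)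
    (hε : ∀ x ∉ t, ‖f x‖ ≤ ε) :
    ∫ x in s, ‖f x‖ ^ 2 ∂μ ≤ ε ^ 2 * μ.real s + M ^ 2 * μ.real (s ∩ t) := by
  have : IsFiniteMeasure (μ.restrict s) := isFiniteMeasure_restrict.2 hs
  have hbound : ∀ x, ‖f x‖ ^ 2 ≤ ε ^ 2 + t.indicator (fun _ => M ^ 2) x := by
    intro x
    by_cases hx : x ∈ t
    · rw [indicator_of_mem hx]
      exact (pow_le_pow_left₀ (norm_nonneg _) (hM x) 2).trans (le_add_of_nonneg_left (sq_nonneg ε))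
    · rw [indicator_of_notMem hx, add_zero]
      exact pow_le_pow_left₀ (norm_nonneg _) (hε x hx) 2
  calc ∫ x in s, ‖f x‖ ^ 2 ∂μ ≤ ∫ x in s, (ε ^ 2 + t.indicator (fun _ => M ^ 2) x) ∂μ :=
        integral_mono_of_nonneg (.of_forall fun x => by positivity)
          ((integrable_const _).add ((integrable_const _).indicator ht))
          (.of_forall hbound)
    _ = ε ^ 2 * μ.real s + M ^ 2 * μ.real (s ∩ t) := by
        rw [integral_add (integrable_const _) ((integrable_const _).indicator ht),
          setIntegral_const, integral_indicator_const _ ht, measureReal_restrict_apply ht,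
          inter_comm, smul_eq_mul, smul_eq_mul, mul_comm, mul_comm (μ.real _)]

theorem Complex.measureReal_ball {r : ℝ} (hr : 0 ≤ r) (a : ℂ) :
    volume.real (Metric.ball a r) = Real.pi * r ^ 2 := by
  simp [measureReal_def, ENNReal.toReal_ofReal hr, mul_comm]

theorem Complex.measureReal_ball_inter_ball_le {r ρ : ℝ} (hr : 0 ≤ r) (hρ : 0 ≤ ρ) (a b : ℂ) :
    volume.real (Metric.ball a ρ ∩ Metric.ball b r) ≤ Real.pi * min r ρ ^ 2 := by
  rcases le_total r ρ with hrρ | hρr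
  · rw [min_eq_left hrρ, ← Complex.measureReal_ball hr b]
    exact measureReal_mono inter_subset_right measure_ball_lt_top.ne
  · rw [min_eq_right hρr, ← Complex.measureReal_ball hρ a]
    exact measureReal_mono inter_subset_left measure_ball_lt_top.ne

theorem Real.rpow_neg_mul_sq {x : ℝ} (hx : 0 < x) (v : ℝ) : x ^ (-v) * x ^ 2 = x ^ (2 - v) := by
  rw [← Real.rpow_two, ← Real.rpow_add hx, neg_add_eq_sub]

theorem Real.rpow_neg_mul_min_sq_le {r ρ v : ℝ} (hr : 0 ≤ r) (hρ : 0 < ρ) (hv0 : 0 ≤ v)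
    (hv2 : v ≤ 2) : ρ ^ (-v) * min r ρ ^ 2 ≤ r ^ (2 - v) := by
  rcases le_total r ρ with hrρ | hρr
  · rw [min_eq_left hrρ]
    rcases hr.eq_or_lt with rfl | hr
    · rw [zero_pow two_ne_zero, mul_zero]
      exact Real.rpow_nonneg le_rfl _
    · calc ρ ^ (-v) * r ^ 2 ≤ r ^ (-v) * r ^ 2 := by
            gcongr ?_ * _
            exact Real.rpow_le_rpow_of_nonpos hr hrρ (neg_nonpos.2 hv0)
        _ = r ^ (2 - v) := Real.rpow_neg_mul_sq hr v
  · rw [min_eq_right hρr, Real.rpow_neg_mul_sq hρ]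
    exact Real.rpow_le_rpow hρ.le hρr (by linarith)

section Ball

variable {E : Type*} [NormedAddCommGroup E] {h : ℂ → E} {M ε r ρ : ℝ}

theorem setIntegral_ball_sq_norm_le (hr : 0 ≤ r) (hρ : 0 ≤ ρ) (hM : ∀ u, ‖h u‖ ≤ M)
    (hε : ∀ u, r ≤ ‖u‖ → ‖h u‖ ≤ ε) (u₀ : ℂ) :
    ∫ u in Metric.ball u₀ ρ, ‖h u‖ ^ 2 ≤ Real.pi * (ε ^ 2 * ρ ^ 2 + M ^ 2 * min r ρ ^ 2) := by
  have hout : ∀ u ∉ Metric.ball (0 : ℂ) r, ‖h u‖ ≤ ε := fun u hu =>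
    hε u (not_lt.1 (by simpa only [mem_ball_zero_iff] using hu))
  calc ∫ u in Metric.ball u₀ ρ, ‖h u‖ ^ 2
      ≤ ε ^ 2 * volume.real (Metric.ball u₀ ρ)
          + M ^ 2 * volume.real (Metric.ball u₀ ρ ∩ Metric.ball 0 r) :=
        setIntegral_sq_norm_le_of_le_off measure_ball_lt_top.ne Metric.isOpen_ball.measurableSet
          hM hout
    _ ≤ ε ^ 2 * (Real.pi * ρ ^ 2) + M ^ 2 * (Real.pi * min r ρ ^ 2) := by
        rw [Complex.measureReal_ball hρ]
        gcongr
        exact Complex.measureReal_ball_inter_ball_le hr hρ u₀ 0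
    _ = Real.pi * (ε ^ 2 * ρ ^ 2 + M ^ 2 * min r ρ ^ 2) := by ring

theorem rpow_neg_mul_setIntegral_ball_sq_norm_le {v : ℝ} (hr : 0 ≤ r) (hρ : 0 < ρ)
    (hv0 : 0 ≤ v) (hv2 : v ≤ 2) (hM : ∀ u, ‖h u‖ ≤ M) (hε : ∀ u, r ≤ ‖u‖ → ‖h u‖ ≤ ε)
    (u₀ : ℂ) :
    ρ ^ (-v) * ∫ u in Metric.ball u₀ ρ, ‖h u‖ ^ 2 ≤
      Real.pi * (ε ^ 2 * ρ ^ (2 - v) + M ^ 2 * r ^ (2 - v)) := by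
  have hρv : 0 ≤ ρ ^ (-v) := Real.rpow_nonneg hρ.le _
  calc ρ ^ (-v) * ∫ u in Metric.ball u₀ ρ, ‖h u‖ ^ 2
      ≤ ρ ^ (-v) * (Real.pi * (ε ^ 2 * ρ ^ 2 + M ^ 2 * min r ρ ^ 2)) :=
        mul_le_mul_of_nonneg_left (setIntegral_ball_sq_norm_le hr hρ.le hM hε u₀) hρv
    _ = Real.pi * (ε ^ 2 * (ρ ^ (-v) * ρ ^ 2) + M ^ 2 * (ρ ^ (-v) * min r ρ ^ 2)) := by ring
    _ ≤ Real.pi * (ε ^ 2 * ρ ^ (2 - v) + M ^ 2 * r ^ (2 - v)) := by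
        rw [Real.rpow_neg_mul_sq hρ]
        gcongr
        exact Real.rpow_neg_mul_min_sq_le hr hρ hv0 hv2

end Ball

theorem stmt_17_general (q : ℕ) (ε₃ M C' R vex : ℝ)
    (hε₃ : 0 < ε₃) (hC' : 0 ≤ C') (hv : vex ∈ Ioo (0:ℝ) 2) :
    ∃ C'' : ℝ, ∀ (τ : ℝ) (h : ℂ → ℂ), Measurable h →
      (∀ u : ℂ, ‖h u‖ ≤ M) →
      (∀ u : ℂ, C' * |τ| ^ ((1:ℝ) / q) * ε₃ ^ (-(1:ℝ) / (2 * q)) ≤ ‖u‖ → ‖h u‖ ≤ ε₃) →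
      ∀ ρ ∈ Ioo (0:ℝ) (R / 4), ∀ u₀ : ℂ, ‖u₀‖ ≤ R / 4 →
        ρ ^ (-vex) * (∫ u in Metric.ball u₀ ρ, ‖h u‖ ^ 2) ≤
          C'' * (ε₃ ^ 2 * ρ ^ (2 - vex) +
            M ^ 2 * (|τ| ^ ((1:ℝ) / q) * ε₃ ^ (-(1:ℝ) / (2 * q))) ^ (2 - vex)) := by
  refine ⟨Real.pi * (1 + C' ^ (2 - vex)), fun τ h _ hM hε ρ hρ u₀ _ => ?_⟩
  set A := |τ| ^ ((1:ℝ) / q) * ε₃ ^ (-(1:ℝ) / (2 * q))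
  have hA : 0 ≤ A := by positivity
  calc ρ ^ (-vex) * (∫ u in Metric.ball u₀ ρ, ‖h u‖ ^ 2)
      ≤ Real.pi * (ε₃ ^ 2 * ρ ^ (2 - vex) + M ^ 2 * (C' * A) ^ (2 - vex)) :=
        rpow_neg_mul_setIntegral_ball_sq_norm_le (mul_nonneg hC' hA) hρ.1 hv.1.le hv.2.le hM
          (fun u hu => hε u ((mul_assoc _ _ _).trans_le hu)) u₀
    _ ≤ Real.pi * (1 + C' ^ (2 - vex)) * (ε₃ ^ 2 * ρ ^ (2 - vex) + M ^ 2 * A ^ (2 - vex)) := by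
        have hC'v : 0 ≤ C' ^ (2 - vex) := Real.rpow_nonneg hC' _
        have hρv : 0 ≤ ρ ^ (2 - vex) := Real.rpow_nonneg hρ.1.le _
        have hAv : 0 ≤ A ^ (2 - vex) := Real.rpow_nonneg hA _
        rw [Real.mul_rpow hC' hA]
        nlinarith [Real.pi_pos, mul_nonneg (mul_nonneg hC'v (sq_nonneg ε₃)) hρv,
          mul_nonneg (sq_nonneg M) hAv]

/-- Weighted Morrey-type estimate for the Beltrami deviation near a degenerating critical
point: if `‖h‖ ≤ M` everywhere and `‖h(u)‖ ≤ ε₃` whenever `|u| ≥ C'|τ|^{1/q} ε₃^{-1/(2q)}`,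
then for `v ∈ (0,2)`, `ρ ∈ (0, R/4)` and `|u₀| ≤ R/4`,
`ρ^{-v} ∫_{|u-u₀|<ρ} |h|² ≤ C''(ε₃² ρ^{2-v} + M² (|τ|^{1/q} ε₃^{-1/(2q)})^{2-v})`
with `C''` independent of `τ`, `h`, `ρ`, `u₀`. -/
theorem stmt_17 (q : ℕ) (hq : 1 ≤ q) (ε₃ M C' R vex : ℝ)
    (hε₃ : 0 < ε₃) (hM : 0 ≤ M) (hC' : 0 ≤ C') (hR : 0 < R) (hv : vex ∈ Ioo (0:ℝ) 2) :
    ∃ C'' : ℝ, ∀ (τ : ℝ) (h : ℂ → ℂ), Measurable h →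
      (∀ u : ℂ, ‖h u‖ ≤ M) →
      (∀ u : ℂ, C' * |τ| ^ ((1:ℝ) / q) * ε₃ ^ (-(1:ℝ) / (2 * q)) ≤ ‖u‖ → ‖h u‖ ≤ ε₃) →
      ∀ ρ ∈ Ioo (0:ℝ) (R / 4), ∀ u₀ : ℂ, ‖u₀‖ ≤ R / 4 →
        ρ ^ (-vex) * (∫ u in Metric.ball u₀ ρ, ‖h u‖ ^ 2) ≤
          C'' * (ε₃ ^ 2 * ρ ^ (2 - vex) +
            M ^ 2 * (|τ| ^ ((1:ℝ) / q) * ε₃ ^ (-(1:ℝ) / (2 * q))) ^ (2 - vex)) :=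
  stmt_17_general q ε₃ M C' R vex hε₃ hC' hv
end
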